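/- arXiv:0803.2371 — 5 statements merged into one kernel-verified Lean document; each statement's English description precedes it below -/
import Mathlib

section
/- Let Z, N, A be n×n real matrices and let I denote the n×n identity matrix. Then rank(Z·A − A·N) ≤ rank(A − Zᵀ·A·N) + rank(I − Z·Zᵀ). (In displacement notation: δ^Δ_{Z,N}{A} ≤ δ^∇_{Zᵀ,N}{A} + δ^∇_{Z,Zᵀ}{I}.) -/
open Matrix

theorem mul_sub_mul_eq_mul_add_mul {R : Type*} [Ring R] (z a n w : R) :
    z * a - a * n = z * (a - w * a * n) + (1 - z * w) * -(a * n) := by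
  noncomm_ring

theorem Matrix.rank_add_le {K m n : Type*} [Field K] [Finite m] [Fintype n]
    (A B : Matrix m n K) : (A + B).rank ≤ A.rank + B.rank := by
  unfold Matrix.rank
  rw [Matrix.mulVecLin_add]
  exact (Submodule.finrank_mono (LinearMap.range_add_le A.mulVecLin B.mulVecLin)).trans
    (Submodule.finrank_add_le_finrank_add_finrank _ _)

theorem Matrix.rank_mul_sub_mul_le {K n : Type*} [Field K] [Fintype n] [DecidableEq n]
    (Z N W A : Matrix n n K) :
    (Z * A - A * N).rank ≤ (A - W * A * N).rank + (1 - Z * W).rank := by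
  rw [mul_sub_mul_eq_mul_add_mul Z A N W]
  exact (rank_add_le _ _).trans
    (Nat.add_le_add (rank_mul_le_right _ _) (rank_mul_le_left _ _))

theorem displacement_delta_le_nabla (n : ℕ) (Z N A : Matrix (Fin n) (Fin n) ℝ) :
    (Z * A - A * N).rank ≤ (A - Zᵀ * A * N).rank + ((1 : Matrix (Fin n) (Fin n) ℝ) - Z * Zᵀ).rank :=
  rank_mul_sub_mul_le Z N Zᵀ A
end

section
/- Let A, Z, N be n×n real matrices and let η be a real number such that A + ηI is invertible, where I is the n×n identity. Set R = (A + ηI)⁻¹ (the regularized inverse). Then rank(R − N·R·Z) ≤ rank(A − Z·A·N) + rank(I − Z·N). That is, δ^∇_{N,Z}{R} ≤ δ^∇_{Z,N}{A} + δ^∇_{Z,N}{I}. -/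
/-!
Write `B = A + ηI`, `X = N B⁻¹` and `Y = Z B`. Then `∇_{N,Z} B⁻¹ = (I - XY) B⁻¹` and
`I - YX = (∇_{Z,N} B) B⁻¹`, while `I - XY` and `I - YX` have the same rank, because `X` and `Y`
map their kernels injectively into each other. Hence `∇_{N,Z} B⁻¹` and `∇_{Z,N} B` have the same
rank, and `∇_{Z,N} B = ∇_{Z,N} A + η ∇_{Z,N} I` by linearity, so subadditivity of the rank
concludes.
-/

open Matrix

namespace Matrix

section Displacement

variable {n R : Type*} [Fintype n]

/-- `∇_{Z,N} A`. -/
def displacement [Ring R] (Z N A : Matrix n n R) : Matrix n n R :=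
  A - Z * A * N

@[simp]
lemma displacement_add [Ring R] (Z N A B : Matrix n n R) :
    displacement Z N (A + B) = displacement Z N A + displacement Z N B := by
  simp only [displacement, Matrix.mul_add, Matrix.add_mul]
  abel

@[simp]
lemma displacement_one [Ring R] [DecidableEq n] (Z N : Matrix n n R) :
    displacement Z N 1 = 1 - Z * N := by
  rw [displacement, Matrix.mul_one]

@[simp]
lemma displacement_smul [CommRing R] (Z N A : Matrix n n R) (c : R) :
    displacement Z N (c • A) = c • displacement Z N A := by
  simp only [displacement, Matrix.mul_smul, Matrix.smul_mul, smul_sub]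

end Displacement

section Rank

variable {m n K : Type*} [Field K] [Fintype n]

lemma rank_add_le_s5 (A B : Matrix m n K) : (A + B).rank ≤ A.rank + B.rank := by
  rw [rank, rank, rank, mulVecLin_add]
  exact (Submodule.finrank_mono (LinearMap.range_add_le _ _)).trans
    (Submodule.finrank_add_le_finrank_add_finrank _ _)

lemma rank_smul_le [Fintype m] [DecidableEq m] (c : K) (A : Matrix m n K) :
    (c • A).rank ≤ A.rank := by
  simpa only [Matrix.smul_mul, Matrix.one_mul] using rank_mul_le_right (c • (1 : Matrix m m K)) A

end Rank

end Matrix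

lemma LinearMap.finrank_ker_id_sub_comp_le {K V W : Type*} [Field K] [AddCommGroup V]
    [Module K V] [AddCommGroup W] [Module K W] [FiniteDimensional K W]
    (f : V →ₗ[K] W) (g : W →ₗ[K] V) :
    Module.finrank K (ker (id - g ∘ₗ f)) ≤ Module.finrank K (ker (id - f ∘ₗ g)) := by
  simp only [← Module.End.one_eq_id]
  have maps_to : ∀ v ∈ ker (1 - g ∘ₗ f), f v ∈ ker (1 - f ∘ₗ g) := fun v hv => by
    simp only [mem_ker, sub_apply, Module.End.one_apply, comp_apply, sub_eq_zero] at hv ⊢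
    exact congrArg f hv
  refine finrank_le_finrank_of_injective (f := f.restrict maps_to) fun v w hvw => ?_
  have hv := v.2
  have hw := w.2
  simp only [mem_ker, sub_apply, Module.End.one_apply, comp_apply, sub_eq_zero] at hv hw
  have hfvw : f v = f w := congrArg Subtype.val hvw
  ext1
  rw [hv, hw, hfvw]

namespace Matrix

variable {n K : Type*} [Field K] [Fintype n] [DecidableEq n]

lemma mulVecLin_one_sub_mul (X Y : Matrix n n K) :
    (1 - X * Y).mulVecLin = LinearMap.id - X.mulVecLin ∘ₗ Y.mulVecLin := by
  ext1 v
  simp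

lemma rank_one_sub_mul_comm (X Y : Matrix n n K) : (1 - X * Y).rank = (1 - Y * X).rank := by
  rw [rank, rank, mulVecLin_one_sub_mul, mulVecLin_one_sub_mul]
  have := LinearMap.finrank_range_add_finrank_ker (LinearMap.id - X.mulVecLin ∘ₗ Y.mulVecLin)
  have := LinearMap.finrank_range_add_finrank_ker (LinearMap.id - Y.mulVecLin ∘ₗ X.mulVecLin)
  have := LinearMap.finrank_ker_id_sub_comp_le X.mulVecLin Y.mulVecLin
  have := LinearMap.finrank_ker_id_sub_comp_le Y.mulVecLin X.mulVecLin
  omega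

theorem rank_displacement_inv {B : Matrix n n K} (hB : IsUnit B.det) (Z N : Matrix n n K) :
    (displacement N Z B⁻¹).rank = (displacement Z N B).rank := by
  have hBinv : B * B⁻¹ = 1 := mul_nonsing_inv B hB
  have hBinv_det : IsUnit B⁻¹.det := isUnit_nonsing_inv_det B hB
  have inv_eq : displacement N Z B⁻¹ = (1 - N * B⁻¹ * (Z * B)) * B⁻¹ := by
    rw [displacement, Matrix.sub_mul, Matrix.one_mul, Matrix.mul_assoc _ (Z * B),
      Matrix.mul_assoc Z, hBinv, Matrix.mul_one]
  have comm_eq : 1 - Z * B * (N * B⁻¹) = displacement Z N B * B⁻¹ := by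
    rw [displacement, Matrix.sub_mul, hBinv, Matrix.mul_assoc _ N, Matrix.mul_assoc]
  rw [inv_eq, rank_mul_eq_left_of_isUnit_det _ _ hBinv_det, rank_one_sub_mul_comm, comm_eq,
    rank_mul_eq_left_of_isUnit_det _ _ hBinv_det]

end Matrix

theorem regularized_inverse_displacement (n : ℕ) (A Z N : Matrix (Fin n) (Fin n) ℝ) (eta : ℝ)
    (h : IsUnit (A + eta • (1 : Matrix (Fin n) (Fin n) ℝ)).det) :
    ((A + eta • (1 : Matrix (Fin n) (Fin n) ℝ))⁻¹
        - N * (A + eta • (1 : Matrix (Fin n) (Fin n) ℝ))⁻¹ * Z).rank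
      ≤ (A - Z * A * N).rank + ((1 : Matrix (Fin n) (Fin n) ℝ) - Z * N).rank := by
  have rank_eq := rank_displacement_inv h Z N
  rw [displacement_add, displacement_smul, displacement_one] at rank_eq
  unfold displacement at rank_eq
  rw [rank_eq]
  exact (rank_add_le_s5 _ _).trans (add_le_add le_rfl (rank_smul_le _ _))
end

section
/- Let M be the 2×2 block real matrix M = [[A, B], [C, D]], where A is n₁×n₁, D is n₂×n₂, B is n₁×n₂ and C is n₂×n₁. Assume both M and A are invertible, and let Ā = D − C·A⁻¹·B be the Schur complement of A in M. Let Z₁, N₁ be n₁×n₁ real matrices and Z₂, N₂ be n₂×n₂ real matrices, and set Z = Z₁ ⊕ Z₂ and N = N₁ ⊕ N₂ (block-diagonal matrices). Then rank(Ā − Z₂·Ā·N₂) ≤ rank(M − Z·M·N), i.e. δ^∇_{Z₂,N₂}{Ā} ≤ δ^∇_{Z,N}{M}. -/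
/-!
Conjugating by `M` turns the displacement `M - Z M N` into `1 - (M⁻¹ Z M) N`, whose rank equals that
of `1 - N (M⁻¹ Z M)`; undoing the conjugation gives `rank (M - Z M N) = rank (M⁻¹ - N M⁻¹ Z)`.
For block-diagonal `Z` and `N` the lower-right block of `M⁻¹ - N M⁻¹ Z` is `Ā⁻¹ - N₂ Ā⁻¹ Z₂`,
since the lower-right block of `M⁻¹` is the inverse of the Schur complement `Ā`. A block has rank
at most that of the whole matrix, and the same rank identity applied to `Ā` concludes.
-/

open Matrix

namespace Matrix

variable {m n K : Type*} [Fintype m] [Fintype n]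

theorem toBlocks₂₂_sub_fromBlocks_diag_mul_mul [Ring K] (X : Matrix (m ⊕ n) (m ⊕ n) K)
    (Z₁ N₁ : Matrix m m K) (Z₂ N₂ : Matrix n n K) :
    (X - fromBlocks Z₁ 0 0 Z₂ * X * fromBlocks N₁ 0 0 N₂).toBlocks₂₂
      = X.toBlocks₂₂ - Z₂ * X.toBlocks₂₂ * N₂ := by
  rw [← fromBlocks_toBlocks X, fromBlocks_multiply, fromBlocks_multiply]
  ext i j
  simp [toBlocks₂₂]

variable [DecidableEq m]

/-- `x ↦ V x` maps the fixed points of `U * V` injectively into those of `V * U`, with left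
inverse `U`; so the nullity of `1 - U * V` is at most that of `1 - V * U`. -/
theorem rank_one_sub_mul_comm_le [Field K] (U V : Matrix m m K) :
    (1 - V * U).rank ≤ (1 - U * V).rank := by
  have mem_ker {W : Matrix m m K} {x : m → K} :
      x ∈ LinearMap.ker (1 - W).mulVecLin ↔ W *ᵥ x = x := by
    simp only [LinearMap.mem_ker, mulVecLin_apply, sub_mulVec, one_mulVec, sub_eq_zero, eq_comm]
  have maps_ker : ∀ x ∈ LinearMap.ker (1 - U * V).mulVecLin,
      V *ᵥ x ∈ LinearMap.ker (1 - V * U).mulVecLin := by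
    intro x hx
    rw [mem_ker, ← mulVec_mulVec, mulVec_mulVec x U V, mem_ker.mp hx]
  have injective : Function.Injective (V.mulVecLin.restrict maps_ker) := by
    rintro ⟨x, hx⟩ ⟨y, hy⟩ hxy
    have hVxy : V *ᵥ x = V *ᵥ y := congrArg Subtype.val hxy
    have hx' := mem_ker.mp hx
    have hy' := mem_ker.mp hy
    rw [← mulVec_mulVec] at hx' hy'
    exact Subtype.ext (show x = y by rw [← hx', hVxy, hy'])
  have nullity_le := LinearMap.finrank_le_finrank_of_injective injective
  have rank_nullity₁ := LinearMap.finrank_range_add_finrank_ker (1 - U * V).mulVecLin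
  have rank_nullity₂ := LinearMap.finrank_range_add_finrank_ker (1 - V * U).mulVecLin
  rw [rank, rank]
  omega

theorem rank_one_sub_mul_comm_s6 [Field K] (U V : Matrix m m K) :
    (1 - U * V).rank = (1 - V * U).rank :=
  le_antisymm (rank_one_sub_mul_comm_le V U) (rank_one_sub_mul_comm_le U V)

theorem rank_sub_mul_mul_eq_rank_inv_sub_mul_mul [Field K] {X : Matrix m m K} (hX : IsUnit X.det)
    (Z N : Matrix m m K) : (X - Z * X * N).rank = (X⁻¹ - N * X⁻¹ * Z).rank := by
  have conj_left : X - Z * X * N = X * (1 - (X⁻¹ * Z * X) * N) := by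
    rw [Matrix.mul_sub, Matrix.mul_one, ← Matrix.mul_assoc, ← Matrix.mul_assoc,
      mul_nonsing_inv_cancel_left _ _ hX]
  have conj_right : 1 - N * (X⁻¹ * Z * X) = (X⁻¹ - N * X⁻¹ * Z) * X := by
    rw [Matrix.sub_mul, nonsing_inv_mul _ hX]
    simp only [Matrix.mul_assoc]
  rw [conj_left, rank_mul_eq_right_of_isUnit_det _ _ hX, rank_one_sub_mul_comm_s6, conj_right,
    rank_mul_eq_left_of_isUnit_det _ _ hX]

variable [DecidableEq n] [CommRing K]
  {A : Matrix m m K} {B : Matrix m n K} {C : Matrix n m K} {D : Matrix n n K}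

theorem isUnit_det_schur_complement (hA : IsUnit A.det) (hM : IsUnit (fromBlocks A B C D).det) :
    IsUnit (D - C * A⁻¹ * B).det := by
  let := A.invertibleOfIsUnitDet hA
  rw [det_fromBlocks₁₁, invOf_eq_nonsing_inv] at hM
  exact isUnit_of_mul_isUnit_right hM

theorem toBlocks₂₂_inv_fromBlocks (hA : IsUnit A.det) (hM : IsUnit (fromBlocks A B C D).det) :
    (fromBlocks A B C D)⁻¹.toBlocks₂₂ = (D - C * A⁻¹ * B)⁻¹ := by
  let := A.invertibleOfIsUnitDet hA
  let := (fromBlocks A B C D).invertibleOfIsUnitDet hM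
  let : Invertible (D - C * ⅟A * B) := by
    rw [invOf_eq_nonsing_inv]
    exact (D - C * A⁻¹ * B).invertibleOfIsUnitDet (isUnit_det_schur_complement hA hM)
  rw [← invOf_eq_nonsing_inv, invOf_fromBlocks₁₁_eq, toBlocks_fromBlocks₂₂, invOf_eq_nonsing_inv,
    invOf_eq_nonsing_inv]

end Matrix

theorem schur_complement_nabla_displacement (n₁ n₂ : ℕ)
    (A : Matrix (Fin n₁) (Fin n₁) ℝ) (B : Matrix (Fin n₁) (Fin n₂) ℝ)
    (C : Matrix (Fin n₂) (Fin n₁) ℝ) (D : Matrix (Fin n₂) (Fin n₂) ℝ)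
    (Z₁ N₁ : Matrix (Fin n₁) (Fin n₁) ℝ) (Z₂ N₂ : Matrix (Fin n₂) (Fin n₂) ℝ)
    (hM : IsUnit (Matrix.fromBlocks A B C D).det) (hA : IsUnit A.det) :
    ((D - C * A⁻¹ * B) - Z₂ * (D - C * A⁻¹ * B) * N₂).rank
      ≤ (Matrix.fromBlocks A B C D
          - Matrix.fromBlocks Z₁ 0 0 Z₂ * Matrix.fromBlocks A B C D
              * Matrix.fromBlocks N₁ 0 0 N₂).rank := by
  set M := fromBlocks A B C D
  calc ((D - C * A⁻¹ * B) - Z₂ * (D - C * A⁻¹ * B) * N₂).rank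
      = ((D - C * A⁻¹ * B)⁻¹ - N₂ * (D - C * A⁻¹ * B)⁻¹ * Z₂).rank :=
        rank_sub_mul_mul_eq_rank_inv_sub_mul_mul (isUnit_det_schur_complement hA hM) _ _
    _ = (M⁻¹ - fromBlocks N₁ 0 0 N₂ * M⁻¹ * fromBlocks Z₁ 0 0 Z₂).toBlocks₂₂.rank := by
        rw [toBlocks₂₂_sub_fromBlocks_diag_mul_mul, toBlocks₂₂_inv_fromBlocks hA hM]
    _ ≤ (M⁻¹ - fromBlocks N₁ 0 0 N₂ * M⁻¹ * fromBlocks Z₁ 0 0 Z₂).rank :=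
        rank_submatrix_le _ Sum.inr Sum.inr
    _ = (M - fromBlocks Z₁ 0 0 Z₂ * M * fromBlocks N₁ 0 0 N₂).rank :=
        (rank_sub_mul_mul_eq_rank_inv_sub_mul_mul hM _ _).symm
end

section
/- Let A be a real m×n matrix with m ≥ n and full column rank (rank A = n), so that AᵀA is invertible, and let B = (AᵀA)⁻¹Aᵀ be its pseudo-inverse. Let Z be an m×m and N an n×n real matrix. Then rank(N·B − B·Z) ≤ rank(Z·A − A·N) + 2·rank(N·Aᵀ − Aᵀ·Z). In displacement notation: δ^Δ_{N,Z}{B} ≤ δ^Δ_{Z,N}{A} + 2·δ^Δ_{N,Z}{Aᵀ}. -/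
/-!
Write `B = (CA)⁻¹C` for a left inverse of `A` (here `C = Aᵀ`), so that `BA = 1` and `CAB = C`.
Expanding both sides with these two relations gives the exact identity
`NB - BZ = (CA)⁻¹ (NC - CZ) (1 - AB) - B (ZA - AN) B`,
hence `rank (NB - BZ) ≤ rank (ZA - AN) + rank (NC - CZ)`.
-/

open Matrix

namespace Matrix

section Field

variable {K m n : Type*} [Field K] [Fintype n]

theorem rank_sub_le (A B : Matrix m n K) : (A - B).rank ≤ A.rank + B.rank := by
  refine le_trans (Submodule.finrank_mono ?_)
    (Submodule.finrank_add_le_finrank_add_finrank (LinearMap.range A.mulVecLin)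
      (LinearMap.range B.mulVecLin))
  rintro _ ⟨v, rfl⟩
  rw [mulVecLin_apply, sub_mulVec]
  exact Submodule.sub_mem_sup (LinearMap.mem_range_self _ v) (LinearMap.mem_range_self _ v)

theorem isUnit_of_rank_eq_card [DecidableEq n] {M : Matrix n n K}
    (h : M.rank = Fintype.card n) : IsUnit M := by
  rw [← mulVec_surjective_iff_isUnit, ← coe_mulVecLin, ← LinearMap.range_eq_top]
  exact Submodule.eq_top_of_finrank_eq (by rw [← rank, h, Module.finrank_fintype_fun_eq_card])

end Field

variable {R m n : Type*} [CommRing R] [Fintype m] [Fintype n] [DecidableEq m] [DecidableEq n]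

theorem mul_sub_mul_nonsing_inv_mul_eq (A : Matrix m n R) (C : Matrix n m R)
    (hCA : IsUnit (C * A).det) (Z : Matrix m m R) (N : Matrix n n R) :
    N * ((C * A)⁻¹ * C) - (C * A)⁻¹ * C * Z =
      (C * A)⁻¹ * (N * C - C * Z) * (1 - A * ((C * A)⁻¹ * C))
        - (C * A)⁻¹ * C * (Z * A - A * N) * ((C * A)⁻¹ * C) := by
  have hBA (X : Matrix n m R) : (C * A)⁻¹ * (C * (A * X)) = X := by
    rw [← Matrix.mul_assoc C, ← Matrix.mul_assoc, nonsing_inv_mul _ hCA, Matrix.one_mul]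
  have hCAB : C * (A * ((C * A)⁻¹ * C)) = C := by
    rw [← Matrix.mul_assoc, ← Matrix.mul_assoc, mul_nonsing_inv _ hCA, Matrix.one_mul]
  simp only [Matrix.mul_sub, Matrix.sub_mul, Matrix.mul_one, Matrix.mul_assoc, hBA, hCAB]
  abel

theorem rank_mul_sub_mul_nonsing_inv_mul_le {K : Type*} [Field K] (A : Matrix m n K)
    (C : Matrix n m K) (hCA : IsUnit (C * A).det) (Z : Matrix m m K) (N : Matrix n n K) :
    (N * ((C * A)⁻¹ * C) - (C * A)⁻¹ * C * Z).rank
      ≤ (Z * A - A * N).rank + (N * C - C * Z).rank := by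
  rw [mul_sub_mul_nonsing_inv_mul_eq A C hCA, add_comm]
  refine (rank_sub_le _ _).trans (add_le_add ?_ ?_) <;>
    exact (rank_mul_le_left _ _).trans (rank_mul_le_right _ _)

end Matrix

theorem pseudoinverse_delta_displacement_general (m n : ℕ)
    (A : Matrix (Fin m) (Fin n) ℝ) (hA : A.rank = n)
    (Z : Matrix (Fin m) (Fin m) ℝ) (N : Matrix (Fin n) (Fin n) ℝ) :
    (N * ((Aᵀ * A)⁻¹ * Aᵀ) - ((Aᵀ * A)⁻¹ * Aᵀ) * Z).rank
      ≤ (Z * A - A * N).rank + 2 * (N * Aᵀ - Aᵀ * Z).rank := by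
  have hG : IsUnit (Aᵀ * A).det := (isUnit_iff_isUnit_det _).mp <|
    isUnit_of_rank_eq_card (by rw [rank_transpose_mul_self, hA, Fintype.card_fin])
  have hbound := rank_mul_sub_mul_nonsing_inv_mul_le A Aᵀ hG Z N
  omega

theorem pseudoinverse_delta_displacement (m n : ℕ) (hmn : n ≤ m)
    (A : Matrix (Fin m) (Fin n) ℝ) (hA : A.rank = n)
    (Z : Matrix (Fin m) (Fin m) ℝ) (N : Matrix (Fin n) (Fin n) ℝ) :
    (N * ((Aᵀ * A)⁻¹ * Aᵀ) - ((Aᵀ * A)⁻¹ * Aᵀ) * Z).rank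
      ≤ (Z * A - A * N).rank + 2 * (N * Aᵀ - Aᵀ * Z).rank :=
  pseudoinverse_delta_displacement_general m n A hA Z N
end

section
/- Let A be a real m×n matrix with m ≥ n and full column rank (rank A = n), so that AᵀA is invertible, and let B = (AᵀA)⁻¹Aᵀ be its pseudo-inverse. Let Z be an m×m and N an n×n real matrix. Then rank(N·B − B·Zᵀ) ≤ 3·rank(Z·A − A·N) + rank(Zᵀ − Z). In displacement notation: δ^Δ_{N,Zᵀ}{B} ≤ 3·δ^Δ_{Z,N}{A} + δ^Δ_{Zᵀ,Z}{I_m}. -/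
/-!
Write `B = C Aᵀ` with `C = (AᵀA)⁻¹`, so that `B A = 1` and `Aᵀ (1 - A B) = 0`. Then
`N B - B Zᵀ = B (A N - Z A) B + B (Z - Zᵀ) A B + C (A N - Z A)ᵀ (1 - A B)`,
and each of the three terms has rank at most that of the displacement in its middle. As rank is
subadditive and invariant under negation and transposition, this even gives the coefficient 2
in place of 3.
-/

open Matrix

namespace Matrix

variable {m n : Type*} [Fintype n]

section CommRing

variable {R : Type*} [CommRing R]

theorem rank_neg (X : Matrix m n R) : (-X).rank = X.rank := by
  have hneg : (-X).mulVecLin = -X.mulVecLin := LinearMap.ext fun v ↦ neg_mulVec v X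
  rw [rank, rank, hneg, LinearMap.range_neg]

theorem rank_sub_comm (X Y : Matrix m n R) : (X - Y).rank = (Y - X).rank := by
  rw [← neg_sub, rank_neg]

theorem rank_mul_mul_le_middle [Fintype m] [StrongRankCondition R] {k l : Type*} [Fintype l]
    (X : Matrix k m R) (Y : Matrix m n R) (W : Matrix n l R) :
    (X * Y * W).rank ≤ Y.rank :=
  (rank_mul_le_left _ W).trans (rank_mul_le_right X Y)

variable [Fintype m] [DecidableEq m] [DecidableEq n]

theorem mul_pinv_sub_pinv_mul_transpose_eq {A : Matrix m n R}
    {C : Matrix n n R} (hC : C * (Aᵀ * A) = 1) (Z : Matrix m m R) (N : Matrix n n R) :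
    N * (C * Aᵀ) - C * Aᵀ * Zᵀ =
      C * Aᵀ * (A * N - Z * A) * (C * Aᵀ) + C * Aᵀ * (Z - Zᵀ) * (A * (C * Aᵀ)) +
        C * (A * N - Z * A)ᵀ * (1 - A * (C * Aᵀ)) := by
  have hBA : C * Aᵀ * A = 1 := by rw [Matrix.mul_assoc, hC]
  have hNB : C * (Aᵀ * (A * (N * (C * Aᵀ)))) = N * (C * Aᵀ) := by
    rw [← Matrix.mul_assoc, ← Matrix.mul_assoc, ← Matrix.mul_assoc, hBA, Matrix.one_mul]
  have hAB : Aᵀ * (A * (C * Aᵀ)) = Aᵀ := by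
    rw [← Matrix.mul_assoc, ← Matrix.mul_assoc, mul_eq_one_comm.mp hC, Matrix.one_mul]
  simp only [Matrix.mul_sub, Matrix.sub_mul, transpose_sub, transpose_mul, Matrix.mul_assoc,
    hNB, hAB, Matrix.mul_one]
  abel

end CommRing

section Field

variable {K : Type*} [Field K]

theorem rank_add_le_s12 (X Y : Matrix m n K) :
    (X + Y).rank ≤ X.rank + Y.rank := by
  have hrange : LinearMap.range (X + Y).mulVecLin ≤
      LinearMap.range X.mulVecLin ⊔ LinearMap.range Y.mulVecLin := by
    rintro _ ⟨v, rfl⟩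
    rw [mulVecLin_add]
    exact Submodule.add_mem_sup ⟨v, rfl⟩ ⟨v, rfl⟩
  exact (Submodule.finrank_mono hrange).trans (Submodule.finrank_add_le_finrank_add_finrank _ _)

theorem isUnit_det_of_rank_eq_card [DecidableEq n] {M : Matrix n n K}
    (hM : M.rank = Fintype.card n) : IsUnit M.det := by
  have hrange : LinearMap.range M.mulVecLin = ⊤ :=
    Submodule.eq_top_of_finrank_eq (by rw [← rank, hM, Module.finrank_fintype_fun_eq_card])
  exact (isUnit_iff_isUnit_det M).mp
    (mulVec_surjective_iff_isUnit.mp (LinearMap.range_eq_top.mp hrange))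

theorem isUnit_det_transpose_mul_self [Fintype m] [LinearOrder K] [IsStrictOrderedRing K]
    [DecidableEq n] {A : Matrix m n K} (hA : A.rank = Fintype.card n) : IsUnit (Aᵀ * A).det :=
  isUnit_det_of_rank_eq_card (by rw [rank_transpose_mul_self, hA])

theorem rank_mul_pinv_sub_pinv_mul_transpose_le [Fintype m] [DecidableEq m] [DecidableEq n]
    {A : Matrix m n K} {C : Matrix n n K} (hC : C * (Aᵀ * A) = 1)
    (Z : Matrix m m K) (N : Matrix n n K) :
    (N * (C * Aᵀ) - C * Aᵀ * Zᵀ).rank ≤ 2 * (Z * A - A * N).rank + (Zᵀ - Z).rank := by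
  rw [mul_pinv_sub_pinv_mul_transpose_eq hC]
  grw [rank_add_le_s12, rank_add_le_s12, rank_mul_mul_le_middle, rank_mul_mul_le_middle,
    rank_mul_mul_le_middle, rank_transpose, rank_sub_comm (A * N), rank_sub_comm Z]
  omega

end Field

end Matrix

theorem pseudoinverse_delta_displacement'_general (m n : ℕ)
    (A : Matrix (Fin m) (Fin n) ℝ) (hA : A.rank = n)
    (Z : Matrix (Fin m) (Fin m) ℝ) (N : Matrix (Fin n) (Fin n) ℝ) :
    (N * ((Aᵀ * A)⁻¹ * Aᵀ) - ((Aᵀ * A)⁻¹ * Aᵀ) * Zᵀ).rank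
      ≤ 3 * (Z * A - A * N).rank + (Zᵀ - Z).rank := by
  have hG : IsUnit (Aᵀ * A).det := isUnit_det_transpose_mul_self (by rwa [Fintype.card_fin])
  grw [rank_mul_pinv_sub_pinv_mul_transpose_le (nonsing_inv_mul _ hG) Z N]
  omega

theorem pseudoinverse_delta_displacement' (m n : ℕ) (hmn : n ≤ m)
    (A : Matrix (Fin m) (Fin n) ℝ) (hA : A.rank = n)
    (Z : Matrix (Fin m) (Fin m) ℝ) (N : Matrix (Fin n) (Fin n) ℝ) :
    (N * ((Aᵀ * A)⁻¹ * Aᵀ) - ((Aᵀ * A)⁻¹ * Aᵀ) * Zᵀ).rank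
      ≤ 3 * (Z * A - A * N).rank + (Zᵀ - Z).rank :=
  pseudoinverse_delta_displacement'_general m n A hA Z N
end
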